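/- Define f₋(β) := −β + ((1−α/2)/Γ(2-α)) ∫₀^{η₂(β)} ( 1 + (m+1)(−βz − (α²/Γ(2-α)) z²/8) )^{1/(1+m)} dz. Then f₋(0) > 0 and lim_{β→∞} f₋(β) = −∞. -/

import Mathlib

open Real Filter

/-- The root η₂(β). -/
noncomputable def eta2 (α m β : ℝ) : ℝ :=
  2 * Real.sqrt 2 *
      Real.sqrt (Real.Gamma (2 - α) * (α ^ 2 + 2 * β ^ 2 * (m + 1) * Real.Gamma (2 - α))) /
    (α ^ 2 * Real.sqrt (m + 1)) - 4 * β * Real.Gamma (2 - α) / α ^ 2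

/-- The lower flux bound f₋. -/
noncomputable def fminus (α m β : ℝ) : ℝ :=
  -β + (1 - α / 2) / Real.Gamma (2 - α) *
    ∫ z in (0:ℝ)..eta2 α m β,
      (1 + (m + 1) * (-(β * z) - α ^ 2 / Real.Gamma (2 - α) * z ^ 2 / 8)) ^ (1 / (1 + m))

/-! For β ≥ 0 the base of the integrand is the concave quadratic `q(z) = 1 - b z - a z²` with
`b = (m+1)β ≥ 0`, `a = (m+1)α²/(8Γ(2-α)) > 0`, and `η₂(β)` is its positive root. Hence
`0 ≤ q ≤ 1` on `[0, η₂(β)]`, so the integral lies between `0` (strictly, at β = 0) and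
`η₂(β) ≤ a^{-1/2}`, a bound independent of β. Thus `f₋(β) ≤ -β + const`. -/

section Quadratic

variable {a b η : ℝ}

lemma quadratic_eq_mul_of_root (h : 1 - b * η - a * η ^ 2 = 0) (z : ℝ) :
    1 - b * z - a * z ^ 2 = (η - z) * (b + a * (η + z)) := by
  linear_combination h

lemma quadratic_nonneg_of_le_root (ha : 0 ≤ a) (hb : 0 ≤ b) (h : 1 - b * η - a * η ^ 2 = 0)
    {z : ℝ} (hz₀ : 0 ≤ z) (hz : z ≤ η) : 0 ≤ 1 - b * z - a * z ^ 2 := by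
  rw [quadratic_eq_mul_of_root h]
  have : 0 ≤ η + z := by linarith
  positivity [sub_nonneg.2 hz]

lemma quadratic_pos_of_lt_root (ha : 0 < a) (hb : 0 ≤ b) (h : 1 - b * η - a * η ^ 2 = 0)
    {z : ℝ} (hz₀ : 0 ≤ z) (hz : z < η) : 0 < 1 - b * z - a * z ^ 2 := by
  rw [quadratic_eq_mul_of_root h]
  have : 0 < η + z := by linarith
  exact mul_pos (sub_pos.2 hz) (by positivity)

lemma le_sqrt_inv_of_root (ha : 0 < a) (hb : 0 ≤ b) (hη : 0 ≤ η)
    (h : 1 - b * η - a * η ^ 2 = 0) : η ≤ √a⁻¹ := by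
  apply Real.le_sqrt_of_sq_le
  rw [← one_div, le_div_iff₀ ha]
  nlinarith [mul_nonneg hb hη]

lemma integral_rpow_quadratic_pos (ha : 0 < a) (hb : 0 ≤ b) (hη : 0 < η)
    (h : 1 - b * η - a * η ^ 2 = 0) {p : ℝ} (hp : 0 ≤ p) :
    0 < ∫ z in (0 : ℝ)..η, (1 - b * z - a * z ^ 2) ^ p := by
  refine intervalIntegral.intervalIntegral_pos_of_pos_on ?_ (fun z hz => ?_) hη
  · exact (Continuous.rpow_const (by fun_prop) fun _ => Or.inr hp).intervalIntegrable _ _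
  · exact rpow_pos_of_pos (quadratic_pos_of_lt_root ha hb h hz.1.le hz.2) p

lemma integral_rpow_quadratic_le (ha : 0 ≤ a) (hb : 0 ≤ b) (hη : 0 ≤ η)
    (h : 1 - b * η - a * η ^ 2 = 0) {p : ℝ} (hp : 0 ≤ p) :
    ∫ z in (0 : ℝ)..η, (1 - b * z - a * z ^ 2) ^ p ≤ η := by
  have hle : ∫ z in (0 : ℝ)..η, (1 - b * z - a * z ^ 2) ^ p ≤ ∫ _ in (0 : ℝ)..η, (1 : ℝ) := by
    refine intervalIntegral.integral_mono_on hη ?_ intervalIntegrable_const fun z hz => ?_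
    · exact (Continuous.rpow_const (by fun_prop) fun _ => Or.inr hp).intervalIntegrable _ _
    · refine rpow_le_one (quadratic_nonneg_of_le_root ha hb h hz.1 hz.2) ?_ hp
      nlinarith [mul_nonneg hb hz.1, mul_nonneg ha (sq_nonneg z)]
  simpa using hle

end Quadratic

section Flux

variable {α m : ℝ}

lemma eta2_pos_and_isRoot (β : ℝ) (hα : α ≠ 0) (hα2 : α < 2) (hm : -1 < m) :
    0 < eta2 α m β ∧
      1 - (m + 1) * β * eta2 α m β - (m + 1) * α ^ 2 / (8 * Gamma (2 - α)) * eta2 α m β ^ 2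
        = 0 := by
  have hG : 0 < Gamma (2 - α) := Gamma_pos_of_pos (by linarith)
  set G := Gamma (2 - α)
  have hm1 : 0 < m + 1 := by linarith
  set t := √(m + 1)
  have ht : 0 < t := sqrt_pos.2 hm1
  have ht2 : t ^ 2 = m + 1 := sq_sqrt hm1.le
  set S := √2 * √(G * (α ^ 2 + 2 * β ^ 2 * (m + 1) * G))
  have hS : 0 ≤ S := by positivity
  have hS2 : S ^ 2 = 2 * (G * (α ^ 2 + 2 * β ^ 2 * (m + 1) * G)) := by
    rw [mul_pow, sq_sqrt zero_le_two, sq_sqrt (by positivity)]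
  have heta : eta2 α m β = (2 * S - 4 * β * G * t) / (α ^ 2 * t) := by
    rw [eta2, mul_assoc 2, div_sub_div _ _ (by positivity) (by positivity),
      div_eq_div_iff (by positivity) (by positivity)]
    ring
  clear_value S t
  have hdisc : (2 * S) ^ 2 - (4 * β * G * t) ^ 2 = 8 * G * α ^ 2 := by
    linear_combination 4 * hS2 - 16 * β ^ 2 * G ^ 2 * ht2
  rw [heta]
  constructor
  · refine div_pos (sub_pos.2 (lt_of_pow_lt_pow_left₀ 2 (by positivity) ?_)) (by positivity)
    have : 0 < 8 * G * α ^ 2 := by positivity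
    linarith
  · field_simp
    linear_combination 8 * G * α ^ 2 * ht2 - (m + 1) * hdisc

lemma fminus_eq_integral_quadratic (β : ℝ) :
    fminus α m β = -β + (1 - α / 2) / Gamma (2 - α) * ∫ z in (0 : ℝ)..eta2 α m β,
      (1 - (m + 1) * β * z - (m + 1) * α ^ 2 / (8 * Gamma (2 - α)) * z ^ 2) ^ (1 / (1 + m)) := by
  unfold fminus
  congr 3
  ext z
  ring_nf

lemma fminus_zero_pos (hα : α ≠ 0) (hα2 : α < 2) (hm : -1 < m) : 0 < fminus α m 0 := by
  have hG : 0 < Gamma (2 - α) := Gamma_pos_of_pos (by linarith)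
  obtain ⟨hη, hroot⟩ := eta2_pos_and_isRoot 0 hα hα2 hm
  have hm1 : 0 < m + 1 := by linarith
  rw [fminus_eq_integral_quadratic, neg_zero, zero_add]
  have hα2pos : 0 < α ^ 2 := pow_two_pos_of_ne_zero hα
  exact mul_pos (div_pos (by linarith) hG) <| integral_rpow_quadratic_pos (by positivity)
    (mul_zero _).ge hη hroot (one_div_nonneg.2 (by linarith))

lemma fminus_le_neg_add_const (hα : α ≠ 0) (hα2 : α < 2) (hm : -1 < m) {β : ℝ} (hβ : 0 ≤ β) :
    fminus α m β ≤
      -β + (1 - α / 2) / Gamma (2 - α) * √((m + 1) * α ^ 2 / (8 * Gamma (2 - α)))⁻¹ := by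
  have hG : 0 < Gamma (2 - α) := Gamma_pos_of_pos (by linarith)
  obtain ⟨hη, hroot⟩ := eta2_pos_and_isRoot β hα hα2 hm
  have hm1 : 0 < m + 1 := by linarith
  have hα2pos : 0 < α ^ 2 := pow_two_pos_of_ne_zero hα
  have ha : 0 < (m + 1) * α ^ 2 / (8 * Gamma (2 - α)) := by positivity
  have hb : 0 ≤ (m + 1) * β := by positivity
  rw [fminus_eq_integral_quadratic]
  gcongr (-β + ?_ * ?_)
  · exact div_nonneg (by linarith) hG.le
  calc _ ≤ eta2 α m β :=
        integral_rpow_quadratic_le ha.le hb hη.le hroot (one_div_nonneg.2 (by linarith))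
    _ ≤ _ := le_sqrt_inv_of_root ha hb hη.le hroot

end Flux

/-- f₋(0) > 0 and f₋(β) → -∞ as β → ∞. -/
theorem fminus_props (α m : ℝ) (hα : 0 < α) (hα1 : α < 1) (hm : 1 < m) :
    0 < fminus α m 0 ∧ Tendsto (fun β => fminus α m β) atTop atBot := by
  have hα2 : α < 2 := by linarith
  have hm' : -1 < m := by linarith
  refine ⟨fminus_zero_pos hα.ne' hα2 hm', tendsto_atBot_mono' _
    ((eventually_ge_atTop 0).mono fun β hβ => fminus_le_neg_add_const hα.ne' hα2 hm' hβ)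
    (tendsto_atBot_add_const_right _ _ tendsto_neg_atTop_atBot)⟩
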